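/- Let n be a positive integer divisible by 2. Let D_1 and D_2 be sets of divisors of n, and let S_i = ⋃_{d∈D_i} G_n(d) for i = 1,2. If ICG(n,D_1) and ICG(n,D_2) are isospectral, then (a) ∑_{d | n, d odd, d ∈ D_1} φ(n/d) = ∑_{d | n, d odd, d ∈ D_2} φ(n/d), and (b) ∑_{d | n, d even, d ∈ D_1} φ(n/d) = ∑_{d | n, d even, d ∈ D_2} φ(n/d), where φ is Euler's totient function. -/

import Mathlib

/-! The eigenvalue at `k = n` is `|S|`, and every eigenvalue has modulus at most `|S|`, so
isospectral graphs have connection sets of equal size: the even and odd totient sums have the same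
total. Since `ω_n^{n/2} = -1`, the eigenvalue at `k = n/2` is `#even(S) - #odd(S)`, the difference
of the two sums. It is also determined by the spectrum: `S` is stable under `g ↦ n - g`, so
`λ_{n-k} = λ_k`, and pairing `k` with `n - k` shows that the multiplicity of a value `v` is
congruent mod 2 to `[v = λ_n] + [v = λ_{n/2}]`. -/

open Finset

/-- `ω_n = exp(2πi/n)`. -/
noncomputable def omegaN (n : ℕ) : ℂ := Complex.exp (2 * Real.pi * Complex.I / n)

/-- `λ_k(S) = ∑_{g ∈ S} ω_n^{k g}`, the eigenvalues of the circulant graph `Cay(ℤ_n, S)`. -/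
noncomputable def lam (n : ℕ) (S : Finset ℕ) (k : ℕ) : ℂ :=
  ∑ g ∈ S, omegaN n ^ (k * g)

/-- The spectrum of `Cay(ℤ_n, S)`, i.e. the multiset `(λ_k(S))_{k ∈ [n]}`. -/
noncomputable def spec (n : ℕ) (S : Finset ℕ) : Multiset ℂ :=
  (Finset.Icc 1 n).val.map (lam n S)

/-- The connection set of `ICG(n, D)`:
`⋃_{d ∈ D} G_n(d) = {j ∈ [n] : gcd(j,n) ∈ D}` where `G_n(d) = {j ∈ [n] : gcd(j,n) = d}`. -/
def connSet (n : ℕ) (D : Finset ℕ) : Finset ℕ :=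
  (Finset.Icc 1 n).filter (fun j => Nat.gcd j n ∈ D)

lemma omegaN_ne_zero (n : ℕ) : omegaN n ≠ 0 := Complex.exp_ne_zero _

lemma isPrimitiveRoot_omegaN {n : ℕ} (hn : 0 < n) : IsPrimitiveRoot (omegaN n) n := by
  simpa [omegaN] using Complex.isPrimitiveRoot_exp n hn.ne'

lemma omegaN_pow_self (n : ℕ) : omegaN n ^ n = 1 := by
  rcases n.eq_zero_or_pos with rfl | hn
  · exact pow_zero _
  · exact (isPrimitiveRoot_omegaN hn).pow_eq_one

lemma norm_omegaN (n : ℕ) : ‖omegaN n‖ = 1 := by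
  rw [omegaN, show 2 * Real.pi * Complex.I / n = ((2 * Real.pi / n : ℝ) : ℂ) * Complex.I by
    push_cast; ring]
  exact Complex.norm_exp_ofReal_mul_I _

lemma omegaN_pow_half {n : ℕ} (hn : 0 < n) (h2 : 2 ∣ n) : omegaN n ^ (n / 2) = -1 := by
  refine IsPrimitiveRoot.eq_neg_one_of_two_right ?_
  have := (isPrimitiveRoot_omegaN hn).pow_of_dvd (by omega) (Nat.div_dvd_of_dvd h2)
  rwa [Nat.div_div_self h2 hn.ne'] at this

lemma omegaN_pow_sub_mul {n k g : ℕ} (hk : k ≤ n) (hg : g ≤ n) :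
    omegaN n ^ ((n - k) * g) = omegaN n ^ (k * (n - g)) := by
  refine mul_right_cancel₀ (pow_ne_zero (k * g) (omegaN_ne_zero n)) ?_
  rw [← pow_add, ← pow_add, ← add_mul, ← mul_add, Nat.sub_add_cancel hk, Nat.sub_add_cancel hg,
    pow_mul, mul_comm, pow_mul, omegaN_pow_self, one_pow, one_pow]

lemma lam_self (n : ℕ) (S : Finset ℕ) : lam n S n = #S := by
  simp [lam, pow_mul, omegaN_pow_self]

lemma norm_lam_le (n : ℕ) (S : Finset ℕ) (k : ℕ) : ‖lam n S k‖ ≤ #S :=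
  (norm_sum_le _ _).trans_eq (by simp [norm_pow, norm_omegaN])

lemma lam_half {n : ℕ} (hn : 0 < n) (h2 : 2 ∣ n) (S : Finset ℕ) :
    lam n S (n / 2) = #(S.filter Even) - #(S.filter Odd) := by
  have hsign : ∀ g, omegaN n ^ (n / 2 * g) = if Even g then 1 else -1 := fun g => by
    rw [pow_mul, omegaN_pow_half hn h2]
    split_ifs with h
    · exact h.neg_one_pow
    · exact (Nat.not_even_iff_odd.mp h).neg_one_pow
  simp only [lam, hsign, Finset.sum_ite, Finset.sum_const, nsmul_eq_mul, mul_one, mul_neg,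
    Nat.not_even_iff_odd, sub_eq_add_neg]

lemma card_eq_of_spec_eq {n : ℕ} (hn : 0 < n) {S T : Finset ℕ} (h : spec n S = spec n T) :
    #S = #T := by
  have key : ∀ S T : Finset ℕ, spec n S = spec n T → #S ≤ #T := by
    intro S T h
    have hmem : (#S : ℂ) ∈ spec n T := h ▸ lam_self n S ▸
      Multiset.mem_map_of_mem (lam n S) (Finset.mem_val.mpr (Finset.mem_Icc.mpr ⟨hn, le_rfl⟩))
    obtain ⟨k, -, hk⟩ := Multiset.mem_map.mp hmem
    exact_mod_cast (Complex.norm_natCast #S).symm.le.trans (hk ▸ norm_lam_le n T k)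
  exact (key S T h).antisymm (key T S h.symm)

lemma sum_Icc_one_eq_sum_range {M : Type*} [AddCommMonoid M] {f : ℕ → M} {n : ℕ}
    (hf : f n = f 0) : ∑ g ∈ Icc 1 n, f g = ∑ g ∈ range n, f g := by
  rcases n with _ | m
  · simp
  rw [← Finset.Ico_add_one_right_eq_Icc, Finset.sum_Ico_eq_sum_range, Nat.add_sub_cancel,
    Finset.sum_range_succ, Finset.sum_range_succ' f]
  simp only [add_comm 1]
  rw [hf]

lemma sum_Icc_one_reflect {M : Type*} [AddCommMonoid M] {f : ℕ → M} {n : ℕ}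
    (hf : f n = f 0) : ∑ g ∈ Icc 1 n, f (n - g) = ∑ g ∈ Icc 1 n, f g := by
  rw [sum_Icc_one_eq_sum_range hf, ← Finset.Ico_add_one_right_eq_Icc,
    Finset.sum_Ico_reflect _ _ le_rfl, Nat.sub_self, Nat.add_sub_cancel, Finset.range_eq_Ico]

lemma lam_connSet_sub {n k : ℕ} (D : Finset ℕ) (hk : k ≤ n) :
    lam n (connSet n D) (n - k) = lam n (connSet n D) k := by
  let f : ℕ → ℂ := fun g => if Nat.gcd g n ∈ D then omegaN n ^ (k * g) else 0
  have hf : f n = f 0 := by simp [f, mul_comm k, pow_mul, omegaN_pow_self]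
  simp only [lam, connSet, Finset.sum_filter]
  rw [← sum_Icc_one_reflect hf]
  refine Finset.sum_congr rfl fun g hg => ?_
  have hg : g ≤ n := (Finset.mem_Icc.mp hg).2
  simp only [f, Nat.gcd_self_sub_left hg, omegaN_pow_sub_mul hk hg]

lemma card_connSet {n : ℕ} {D : Finset ℕ} (hD : D ⊆ n.divisors) :
    #(connSet n D) = ∑ d ∈ D, Nat.totient (n / d) := by
  have hperiodic : #(connSet n D) = #{g ∈ range n | Nat.gcd g n ∈ D} := by
    simp only [connSet, Finset.card_filter]
    exact sum_Icc_one_eq_sum_range (by simp)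
  rw [hperiodic, Finset.card_eq_sum_card_fiberwise (s := {g ∈ range n | Nat.gcd g n ∈ D})
    fun g hg => (Finset.mem_filter.mp hg).2]
  refine Finset.sum_congr rfl fun d hd => ?_
  rw [Nat.totient_div_of_dvd (Nat.dvd_of_mem_divisors (hD hd)), Finset.filter_filter]
  congr 1
  refine Finset.filter_congr fun g _ => ?_
  rw [Nat.gcd_comm]
  exact ⟨And.right, fun h => ⟨h ▸ hd, h⟩⟩

lemma card_connSet_filter {n : ℕ} {D : Finset ℕ} (hD : D ⊆ n.divisors) (p : ℕ → Prop)
    [DecidablePred p] (hp : ∀ g, p (Nat.gcd g n) ↔ p g) :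
    #((connSet n D).filter p) = ∑ d ∈ D.filter p, Nat.totient (n / d) := by
  have hfilter : (connSet n D).filter p = connSet n (D.filter p) := by
    ext g
    simp [connSet, and_assoc, hp]
  rw [hfilter, card_connSet ((Finset.filter_subset p D).trans hD)]

lemma even_gcd_iff {g n : ℕ} (h2 : 2 ∣ n) : Even (Nat.gcd g n) ↔ Even g := by
  simp only [even_iff_two_dvd, Nat.dvd_gcd_iff, h2, and_true]

lemma odd_gcd_iff {g n : ℕ} (h2 : 2 ∣ n) : Odd (Nat.gcd g n) ↔ Odd g := by
  simp only [← Nat.not_even_iff_odd, even_gcd_iff h2]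

lemma card_filter_even_add_card_filter_odd (S : Finset ℕ) :
    #(S.filter Even) + #(S.filter Odd) = #S := by
  simpa only [Nat.not_even_iff_odd] using Finset.card_filter_add_card_filter_not (s := S) Even

lemma card_zmod_two_eq_card_fixed_of_involution {ι : Type*} [DecidableEq ι] (s : Finset ι)
    (σ : ι → ι) (hσ_mem : ∀ a ∈ s, σ a ∈ s) (hσ : ∀ a ∈ s, σ (σ a) = a) :
    (#s : ZMod 2) = #{a ∈ s | σ a = a} := by
  have hfree : (#{a ∈ s | ¬σ a = a} : ZMod 2) = 0 := by
    rw [Finset.card_eq_sum_ones, Nat.cast_sum, Nat.cast_one]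
    refine Finset.sum_involution (fun a _ => σ a) (fun _ _ => by decide)
      (fun a ha _ => (Finset.mem_filter.mp ha).2) (fun a ha => ?_)
      (fun a ha => hσ a (Finset.mem_filter.mp ha).1)
    obtain ⟨ha, hne⟩ := Finset.mem_filter.mp ha
    exact Finset.mem_filter.mpr ⟨hσ_mem a ha, by rwa [hσ a ha, eq_comm]⟩
  rw [← Finset.card_filter_add_card_filter_not (fun a => σ a = a), Nat.cast_add, hfree, add_zero]

lemma count_spec_zmod_two {n : ℕ} (hn : 0 < n) (h2 : 2 ∣ n) {S : Finset ℕ}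
    (hS : ∀ k ≤ n, lam n S (n - k) = lam n S k) (v : ℂ) :
    ((spec n S).count v : ZMod 2)
      = (if v = lam n S n then 1 else 0) + (if v = lam n S (n / 2) then 1 else 0) := by
  set s := {k ∈ Ioo 0 n | v = lam n S k}
  have hcount : (spec n S).count v = (if v = lam n S n then 1 else 0) + #s := by
    have hIcc : Icc 1 n = insert n (Ioo 0 n) := by
      rw [Finset.Ioo_insert_right hn, ← Finset.Icc_add_one_left_eq_Ioc, zero_add]
    rw [spec, Multiset.count_map, ← Finset.filter_val, ← Finset.card_def, hIcc,
      Finset.filter_insert]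
    split_ifs <;> simp [s, add_comm]
  have hfixed : {k ∈ s | n - k = k} = ({n / 2} : Finset ℕ).filter (v = lam n S ·) := by
    ext k
    simp only [s, Finset.mem_filter, Finset.mem_Ioo, Finset.mem_singleton]
    constructor
    · rintro ⟨⟨-, hvk⟩, hfix⟩
      obtain rfl : k = n / 2 := by omega
      exact ⟨rfl, hvk⟩
    · rintro ⟨rfl, hvk⟩
      exact ⟨⟨by omega, hvk⟩, by omega⟩
  rw [hcount, Nat.cast_add, card_zmod_two_eq_card_fixed_of_involution s (n - ·) ?_ ?_, hfixed,
    Finset.filter_singleton]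
  · split_ifs <;> simp
  · intro k hk
    simp only [s, Finset.mem_filter, Finset.mem_Ioo] at hk ⊢
    exact ⟨by omega, hk.2.trans (hS k hk.1.2.le).symm⟩
  · intro k hk
    simp only [s, Finset.mem_filter, Finset.mem_Ioo] at hk
    omega

lemma lam_half_eq_of_spec_eq {n : ℕ} (hn : 0 < n) (h2 : 2 ∣ n) {S T : Finset ℕ}
    (hS : ∀ k ≤ n, lam n S (n - k) = lam n S k) (hT : ∀ k ≤ n, lam n T (n - k) = lam n T k)
    (h : spec n S = spec n T) : lam n S (n / 2) = lam n T (n / 2) := by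
  by_contra hne
  have hcount := congrArg (fun M => ((M.count (lam n S (n / 2)) : ℕ) : ZMod 2)) h
  simp [count_spec_zmod_two hn h2 hS, count_spec_zmod_two hn h2 hT, lam_self,
    card_eq_of_spec_eq hn h, hne] at hcount

/-- For even `n`, isospectral integral circulant graphs have equal odd-divisor and
even-divisor totient sums. -/
theorem totient_sums_eq_of_isospectral
    (n : ℕ) (hn : 0 < n) (h2 : 2 ∣ n)
    (D₁ D₂ : Finset ℕ)
    (hD₁ : D₁ ⊆ n.divisors) (hD₂ : D₂ ⊆ n.divisors)
    (hspec : spec n (connSet n D₁) = spec n (connSet n D₂)) :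
    (∑ d ∈ D₁.filter (fun d => Odd d), Nat.totient (n / d)
        = ∑ d ∈ D₂.filter (fun d => Odd d), Nat.totient (n / d)) ∧
    (∑ d ∈ D₁.filter (fun d => Even d), Nat.totient (n / d)
        = ∑ d ∈ D₂.filter (fun d => Even d), Nat.totient (n / d)) := by
  have hcard := card_eq_of_spec_eq hn hspec
  have hhalf := lam_half_eq_of_spec_eq hn h2 (fun _ => lam_connSet_sub D₁)
    (fun _ => lam_connSet_sub D₂) hspec
  rw [← card_filter_even_add_card_filter_odd (connSet n D₁),
    ← card_filter_even_add_card_filter_odd (connSet n D₂)] at hcard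
  rw [lam_half hn h2, lam_half hn h2] at hhalf
  simp only [card_connSet_filter hD₁ _ fun _ => even_gcd_iff h2,
    card_connSet_filter hD₁ _ fun _ => odd_gcd_iff h2,
    card_connSet_filter hD₂ _ fun _ => even_gcd_iff h2,
    card_connSet_filter hD₂ _ fun _ => odd_gcd_iff h2] at hcard hhalf
  generalize ∑ d ∈ D₁.filter Even, Nat.totient (n / d) = E₁ at hcard hhalf ⊢
  generalize ∑ d ∈ D₂.filter Even, Nat.totient (n / d) = E₂ at hcard hhalf ⊢
  generalize ∑ d ∈ D₁.filter Odd, Nat.totient (n / d) = O₁ at hcard hhalf ⊢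
  generalize ∑ d ∈ D₂.filter Odd, Nat.totient (n / d) = O₂ at hcard hhalf ⊢
  have hdiff : (E₁ : ℤ) - O₁ = E₂ - O₂ := by exact_mod_cast hhalf
  omega
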